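/- arXiv:1807.10922 — 3 statements merged into one kernel-verified Lean document; each statement's English description precedes it below -/
import Mathlib

section
/- Suppose σ(x)² = 2x² for all |x| < δ for some δ > 0. Then V(x) = ln ln(1/|x| + e) satisfies L V(x) = [ |x|²(1+e|x|) ln(1/|x|+e) + e|x| ln(1/|x|+e) − 1 ] / [ (1+e|x|)² ln²(1/|x|+e) ], and there exists 0 < ε < δ such that L V(x) ≤ 0 for all 0 < |x| < ε. -/
/-!
For `t > 0` put `ℓ(t) = log (1/t + e)`. Differentiating `V = log ∘ ℓ` twice and substituting
`σ² = 2x²` gives the closed form of `L V`; evenness of `V` reduces `x < 0` to `|x|`.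
The numerator of `L V(t)` is `(t (1 + e t) + e) · t ℓ(t) - 1`, and
`t ℓ(t) = t log (1 + e t) - t log t` tends to `0` as `t → 0⁺`, so the numerator tends to `-1`
while the denominator is positive.
-/

open Real Filter Topology Set

section EvenOdd

variable {𝕜 F : Type*} [NontriviallyNormedField 𝕜] [NormedAddCommGroup F] [NormedSpace 𝕜 F]
  {f : 𝕜 → F}

theorem Function.Even.odd_deriv (hf : Function.Even f) : Function.Odd (deriv f) := fun x => by
  have h := deriv_comp_neg f (-x)
  rwa [neg_neg, show (fun y => f (-y)) = f from funext hf] at h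

theorem Function.Odd.even_deriv (hf : Function.Odd f) : Function.Even (deriv f) := fun x => by
  have h := deriv_comp_neg f (-x)
  rwa [neg_neg, show (fun y => f (-y)) = fun y => -f y from funext hf, deriv.fun_neg,
    neg_inj] at h

end EvenOdd

theorem Function.Even.cubic_drift_generator_abs {f : ℝ → ℝ} (hf : Function.Even f) (x : ℝ) :
    (-x ^ 3 + x) * deriv f x + x ^ 2 * deriv (deriv f) x
      = (-|x| ^ 3 + |x|) * deriv f |x| + |x| ^ 2 * deriv (deriv f) |x| := by
  rcases abs_choice x with h | h <;> rw [h]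
  rw [hf.odd_deriv x, hf.odd_deriv.even_deriv x]
  ring

theorem Filter.Eventually.exists_Ioo_forall {α : Type*} [LinearOrder α] [DenselyOrdered α]
    [TopologicalSpace α] [OrderTopology α] {p : α → Prop} {a b : α} (hab : a < b)
    (h : ∀ᶠ t in 𝓝[>] a, p t) : ∃ c ∈ Ioo a b, ∀ t ∈ Ioo a c, p t := by
  obtain ⟨c', hac', hc'b⟩ := exists_between hab
  obtain ⟨c, ⟨hac, hcc'⟩, hsub⟩ := (mem_nhdsGT_iff_exists_mem_Ioc_Ioo_subset hac').1 h
  exact ⟨c, ⟨hac, hcc'.trans_lt hc'b⟩, hsub⟩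

namespace LogLogLyapunov

noncomputable def V (y : ℝ) : ℝ := log (log (1 / |y| + exp 1))

noncomputable def dV (t : ℝ) : ℝ := -((t + exp 1 * t ^ 2) * log (1 / t + exp 1))⁻¹

noncomputable def d2V (t : ℝ) : ℝ :=
  ((1 + 2 * exp 1 * t) * log (1 / t + exp 1) - 1) /
    ((t + exp 1 * t ^ 2) ^ 2 * log (1 / t + exp 1) ^ 2)

/-- `L V(x)` of the statement, written in terms of `t = |x|`. -/
noncomputable def LV (t : ℝ) : ℝ :=
  (t ^ 2 * (1 + exp 1 * t) * log (1 / t + exp 1) + exp 1 * t * log (1 / t + exp 1) - 1)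
    / ((1 + exp 1 * t) ^ 2 * log (1 / t + exp 1) ^ 2)

theorem V_even : Function.Even V := fun y => by rw [V, V, abs_neg]

variable {t : ℝ}

theorem one_lt_inv_add_exp_one (ht : 0 < t) : 1 < 1 / t + exp 1 := by
  have : 1 < exp 1 := one_lt_exp_iff.2 one_pos
  have : 0 < 1 / t := by positivity
  linarith

theorem log_inv_add_exp_one_pos (ht : 0 < t) : 0 < log (1 / t + exp 1) :=
  log_pos (one_lt_inv_add_exp_one ht)

theorem hasDerivAt_log_inv_add_exp_one (ht : 0 < t) :
    HasDerivAt (fun y => log (1 / y + exp 1)) (-(t + exp 1 * t ^ 2)⁻¹) t := by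
  have h : HasDerivAt (fun y => 1 / y + exp 1) (-(t ^ 2)⁻¹) t := by
    simpa only [one_div] using (hasDerivAt_inv ht.ne').add_const (exp 1)
  refine (h.log (zero_lt_one.trans (one_lt_inv_add_exp_one ht)).ne').congr_deriv ?_
  field_simp

theorem hasDerivAt_V (ht : 0 < t) : HasDerivAt V (dV t) t := by
  have hV : V =ᶠ[𝓝 t] fun y => log (log (1 / y + exp 1)) :=
    eventually_of_mem (Ioi_mem_nhds ht) fun y hy => by rw [V, abs_of_pos hy]
  have h := (hasDerivAt_log_inv_add_exp_one ht).log (log_inv_add_exp_one_pos ht).ne'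
  refine (h.congr_of_eventuallyEq hV).congr_deriv ?_
  rw [dV, mul_inv, neg_div, div_eq_mul_inv]

theorem hasDerivAt_dV (ht : 0 < t) : HasDerivAt dV (d2V t) t := by
  have hp : HasDerivAt (fun y => y + exp 1 * y ^ 2) (1 + 2 * exp 1 * t) t := by
    refine ((hasDerivAt_id' t).add ((hasDerivAt_pow 2 t).const_mul (exp 1))).congr_deriv ?_
    ring
  have hpL := (hp.fun_mul (hasDerivAt_log_inv_add_exp_one ht)).fun_inv
    (mul_pos (by positivity) (log_inv_add_exp_one_pos ht)).ne'
  refine hpL.fun_neg.congr_deriv ?_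
  have : t + exp 1 * t ^ 2 ≠ 0 := by positivity
  have := (log_inv_add_exp_one_pos ht).ne'
  rw [d2V]
  field_simp
  ring

theorem deriv_V (ht : 0 < t) : deriv V t = dV t := (hasDerivAt_V ht).deriv

theorem deriv_deriv_V (ht : 0 < t) : deriv (deriv V) t = d2V t := by
  have hV : deriv V =ᶠ[𝓝 t] dV := eventually_of_mem (Ioi_mem_nhds ht) fun y hy => deriv_V hy
  rw [hV.deriv_eq, (hasDerivAt_dV ht).deriv]

theorem cubic_drift_generator_V (ht : 0 < t) :
    (-t ^ 3 + t) * deriv V t + t ^ 2 * deriv (deriv V) t = LV t := by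
  have := (log_inv_add_exp_one_pos ht).ne'
  rw [deriv_V ht, deriv_deriv_V ht, dV, d2V, LV]
  field_simp
  ring

theorem log_inv_add_exp_one_eq (ht : 0 < t) :
    log (1 / t + exp 1) = log (1 + exp 1 * t) - log t := by
  rw [← log_div (by positivity) ht.ne']
  congr 1
  field_simp

theorem tendsto_mul_log_inv_add_exp_one :
    Tendsto (fun t => t * log (1 / t + exp 1)) (𝓝[>] 0) (𝓝 0) := by
  have hcont : ContinuousAt (fun t => t * log (1 + exp 1 * t) - t * log t) 0 :=
    (by fun_prop (disch := norm_num) : ContinuousAt (fun t => t * log (1 + exp 1 * t)) 0).sub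
      continuous_mul_log.continuousAt
  have h := hcont.tendsto.mono_left (nhdsWithin_le_nhds (s := Ioi 0))
  simp only [mul_zero, zero_mul, add_zero, log_one, sub_zero] at h
  refine h.congr' (eventually_nhdsWithin_of_forall fun t ht => ?_)
  beta_reduce
  rw [log_inv_add_exp_one_eq ht, mul_sub]

theorem eventually_LV_neg : ∀ᶠ t in 𝓝[>] 0, LV t < 0 := by
  have hpoly : Tendsto (fun t => t * (1 + exp 1 * t) + exp 1) (𝓝[>] 0) (𝓝 (exp 1)) := by
    have h := ((by fun_prop : Continuous fun t => t * (1 + exp 1 * t) + exp 1).tendsto 0)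
    simpa only [zero_mul, zero_add] using h.mono_left (nhdsWithin_le_nhds (s := Ioi 0))
  have hN := (hpoly.mul tendsto_mul_log_inv_add_exp_one).sub_const 1
  rw [mul_zero, zero_sub] at hN
  filter_upwards [hN.eventually (gt_mem_nhds neg_one_lt_zero), self_mem_nhdsWithin]
    with t hNt ht
  have : 0 < t := ht
  have := log_inv_add_exp_one_pos ht
  refine div_neg_of_neg_of_pos (lt_of_eq_of_lt ?_ hNt) (by positivity)
  ring

end LogLogLyapunov

open LogLogLyapunov in
/-- If `σ(x)² = 2x²` for `|x| < δ`, then `V x = ln ln (1/|x| + e)` satisfies the stated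
formula for `L V` on `0 < |x| < δ`, and there is `0 < ε < δ` with `L V(x) ≤ 0` for
`0 < |x| < ε`. -/
theorem stmt_8 (σ : ℝ → ℝ) (δ : ℝ) (hδ : 0 < δ)
    (hσ : ∀ x : ℝ, |x| < δ → (σ x) ^ 2 = 2 * x ^ 2) :
    (∀ x : ℝ, 0 < |x| → |x| < δ →
      (-x ^ 3 + x) * deriv (fun y : ℝ => Real.log (Real.log (1 / |y| + Real.exp 1))) x
        + (σ x) ^ 2 / 2
          * deriv (deriv (fun y : ℝ => Real.log (Real.log (1 / |y| + Real.exp 1)))) x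
      = (x ^ 2 * (1 + Real.exp 1 * |x|) * Real.log (1 / |x| + Real.exp 1)
          + Real.exp 1 * |x| * Real.log (1 / |x| + Real.exp 1) - 1)
        / ((1 + Real.exp 1 * |x|) ^ 2 * (Real.log (1 / |x| + Real.exp 1)) ^ 2)) ∧
    ∃ ε : ℝ, 0 < ε ∧ ε < δ ∧ ∀ x : ℝ, 0 < |x| → |x| < ε →
      (x ^ 2 * (1 + Real.exp 1 * |x|) * Real.log (1 / |x| + Real.exp 1)
          + Real.exp 1 * |x| * Real.log (1 / |x| + Real.exp 1) - 1)
        / ((1 + Real.exp 1 * |x|) ^ 2 * (Real.log (1 / |x| + Real.exp 1)) ^ 2) ≤ 0 := by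
  refine ⟨fun x hx hxδ => ?_, ?_⟩
  · have hσx : σ x ^ 2 / 2 = x ^ 2 := by rw [hσ x hxδ]; ring
    change _ * deriv V x + _ * deriv (deriv V) x = _
    rw [hσx, Function.Even.cubic_drift_generator_abs V_even, cubic_drift_generator_V hx, LV,
      sq_abs]
  · obtain ⟨ε, ⟨hε, hεδ⟩, hLV⟩ := eventually_LV_neg.exists_Ioo_forall hδ
    refine ⟨ε, hε, hεδ, fun x hx hxε => ?_⟩
    simpa only [LV, sq_abs] using (hLV |x| ⟨hx, hxε⟩).le
end

section
/- Suppose there are ε > 0 and κ > √2 such that |σ(x)| ≥ κ|x| for all 0 < |x| < ε. Then for any α with 0 < α ≤ 1 − 2/κ², the function V(x) = |x|^α satisfies L V(x) ≤ −α|x|^{α+2} < 0 for all 0 < |x| < ε. -/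
/-- If `|σ x| ≥ κ |x|` for `0 < |x| < ε` with `κ > √2`, then for any `0 < α ≤ 1 - 2/κ²`,
the function `V x = |x|^α` satisfies `L V(x) ≤ -α |x|^{α+2} < 0` for `0 < |x| < ε`. -/
theorem stmt_9 (σ : ℝ → ℝ) (ε κ : ℝ) (hε : 0 < ε) (hκ : Real.sqrt 2 < κ)
    (h : ∀ x : ℝ, 0 < |x| → |x| < ε → κ * |x| ≤ |σ x|)
    (α : ℝ) (hα0 : 0 < α) (hα1 : α ≤ 1 - 2 / κ ^ 2) :
    ∀ x : ℝ, 0 < |x| → |x| < ε →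
      α * (-x ^ 3 + x) * |x| ^ (α - 1) * Real.sign x
          + (α * (α - 1) / 2) * (σ x) ^ 2 * |x| ^ (α - 2)
        ≤ -α * |x| ^ (α + 2) ∧ -α * |x| ^ (α + 2) < 0 := by
  intro x hx hxε
  set t := |x| with htdef
  have ht0 : 0 < t := hx
  have hκ0 : 0 < κ := lt_trans (Real.sqrt_pos.2 (by norm_num)) hκ
  have hκ2 : 2 < κ ^ 2 := by
    nlinarith [Real.sq_sqrt (by norm_num : (0:ℝ) ≤ 2), Real.sqrt_nonneg 2]
  have hσ : κ * t ≤ |σ x| := h x hx hxε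
  have hσ2 : κ ^ 2 * t ^ 2 ≤ (σ x) ^ 2 := by
    nlinarith [sq_abs (σ x), abs_nonneg (σ x), mul_nonneg hκ0.le ht0.le]
  have hακ : α * κ ^ 2 ≤ κ ^ 2 - 2 := by
    have h1 := mul_le_mul_of_nonneg_right hα1 (sq_nonneg κ)
    have hκne : κ ^ 2 ≠ 0 := by positivity
    field_simp at h1
    linarith
  -- key sign computation
  have key : (-x ^ 3 + x) * Real.sign x = t - t ^ 3 := by
    rcases (abs_pos.mp hx).lt_or_gt with hneg | hpos
    · rw [Real.sign_of_neg hneg, htdef, abs_of_neg hneg]; ring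
    · rw [Real.sign_of_pos hpos, htdef, abs_of_pos hpos]; ring
  have r1 : t * t ^ (α - 1) = t ^ α := by
    nth_rewrite 1 [← Real.rpow_one t]
    rw [← Real.rpow_add ht0]
    congr 1; ring
  have r2 : t ^ 3 * t ^ (α - 1) = t ^ (α + 2) := by
    rw [← Real.rpow_natCast t 3, ← Real.rpow_add ht0]
    congr 1; push_cast; ring
  have r3 : t ^ 2 * t ^ (α - 2) = t ^ α := by
    rw [← Real.rpow_natCast t 2, ← Real.rpow_add ht0]
    congr 1; push_cast; ring
  have hmain : (α * (α - 1) / 2) * (σ x) ^ 2 ≤ -α * t ^ 2 := by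
    nlinarith [mul_nonneg (mul_nonneg hα0.le (by nlinarith : (0:ℝ) ≤ 1 - α))
        (by linarith : (0:ℝ) ≤ (σ x) ^ 2 - κ ^ 2 * t ^ 2),
      mul_nonneg (mul_nonneg hα0.le (sq_nonneg t)) (by linarith : (0:ℝ) ≤ κ ^ 2 - 2 - α * κ ^ 2)]
  have hpow : (0:ℝ) ≤ t ^ (α - 2) := Real.rpow_nonneg ht0.le _
  constructor
  · have step : (α * (α - 1) / 2) * (σ x) ^ 2 * t ^ (α - 2) ≤ -α * (t ^ 2 * t ^ (α - 2)) := by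
      have := mul_le_mul_of_nonneg_right hmain hpow
      linarith [this]
    have lhs_eq : α * (-x ^ 3 + x) * t ^ (α - 1) * Real.sign x
        = α * t ^ α - α * t ^ (α + 2) := by
      have : α * (-x ^ 3 + x) * t ^ (α - 1) * Real.sign x
          = α * ((-x ^ 3 + x) * Real.sign x) * t ^ (α - 1) := by ring
      rw [this, key]
      rw [show α * (t - t ^ 3) * t ^ (α - 1)
          = α * (t * t ^ (α - 1)) - α * (t ^ 3 * t ^ (α - 1)) by ring, r1, r2]
    rw [lhs_eq]
    rw [r3] at step
    linarith
  · have : 0 < t ^ (α + 2) := Real.rpow_pos_of_pos ht0 _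
    nlinarith
end

section
/- Let x_e ∈ {−1, 1}, α > 0, σ : ℝ → ℝ, and suppose c := α · inf_{x : x·x_e > 1} ( x(x + x_e) − (α−1)(σ(x)²/2)|x−x_e|^{−2} ) > 0. Then V(x) = |x − x_e|^α satisfies L V(x) ≤ −c V(x) for all x with x·x_e > 1. -/
/-- Let `x_e ∈ {-1,1}`, `α > 0` and suppose
`c := α · inf_{x : x·x_e > 1} ( x(x+x_e) - (α-1)(σ(x)²/2)|x-x_e|^{-2} ) > 0`.
Then `V x = |x - x_e|^α` satisfies `L V(x) ≤ -c V(x)` for all `x` with `x·x_e > 1`. -/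
theorem stmt_11 (xe : ℝ) (hxe : xe = -1 ∨ xe = 1) (α : ℝ) (hα : 0 < α) (σ : ℝ → ℝ)
    (c : ℝ)
    (hc : c = α * sInf ((fun x : ℝ =>
        x * (x + xe) - (α - 1) * ((σ x) ^ 2 / 2) * |x - xe| ^ (-2 : ℝ)) ''
        {x : ℝ | x * xe > 1}))
    (hcpos : 0 < c) :
    ∀ x : ℝ, x * xe > 1 →
      α * (-x ^ 3 + x) * |x - xe| ^ (α - 1) * Real.sign (x - xe)
          + (α * (α - 1) / 2) * (σ x) ^ 2 * |x - xe| ^ (α - 2)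
        ≤ -c * |x - xe| ^ α := by
  intro x hx
  have hxe2 : xe ^ 2 = 1 := by rcases hxe with h | h <;> simp [h]
  have hxne : x ≠ xe := by
    intro h; rw [h] at hx; nlinarith
  have hA : (0:ℝ) < |x - xe| := abs_pos.mpr (sub_ne_zero.mpr hxne)
  set A := |x - xe| with hAdef
  set S := ((fun x : ℝ =>
        x * (x + xe) - (α - 1) * ((σ x) ^ 2 / 2) * |x - xe| ^ (-2 : ℝ)) ''
        {x : ℝ | x * xe > 1}) with hS
  have hmem : x * (x + xe) - (α - 1) * ((σ x) ^ 2 / 2) * A ^ (-2 : ℝ) ∈ S :=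
    Set.mem_image_of_mem _ hx
  have hbdd : BddBelow S := by
    by_contra hb
    rw [Real.sInf_of_not_bddBelow hb, mul_zero] at hc
    exact absurd hc hcpos.ne'
  have hle : c ≤ α * (x * (x + xe) - (α - 1) * ((σ x) ^ 2 / 2) * A ^ (-2 : ℝ)) := by
    rw [hc]
    exact mul_le_mul_of_nonneg_left (csInf_le hbdd hmem) hα.le
  have h1 : -x ^ 3 + x = -(x * (x + xe) * (x - xe)) := by linear_combination (-x) * hxe2
  have hsgn : (x - xe) * Real.sign (x - xe) = A := by
    rcases lt_trichotomy (x - xe) 0 with h | h | h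
    · rw [Real.sign_of_neg h, hAdef, abs_of_neg h]; ring
    · exact absurd h (sub_ne_zero.mpr hxne)
    · rw [Real.sign_of_pos h, hAdef, abs_of_pos h]; ring
  have e1 : A ^ α = A ^ (α - 1) * A := by
    conv_lhs => rw [show α = α - 1 + 1 by ring]
    rw [Real.rpow_add hA, Real.rpow_one]
  have e2 : A ^ (α - 2) = A ^ α * A ^ (-2 : ℝ) := by
    rw [show α - 2 = α + (-2) by ring, Real.rpow_add hA]
  have key : α * (-x ^ 3 + x) * A ^ (α - 1) * Real.sign (x - xe)
        + (α * (α - 1) / 2) * (σ x) ^ 2 * A ^ (α - 2)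
      = -(α * (x * (x + xe) - (α - 1) * ((σ x) ^ 2 / 2) * A ^ (-2 : ℝ))) * A ^ α := by
    rw [h1, e2, e1]
    linear_combination (-(α * x * (x + xe)) * A ^ (α - 1)) * hsgn
  rw [key]
  have hApos : (0:ℝ) < A ^ α := Real.rpow_pos_of_pos hA α
  nlinarith [hApos, hle]
end
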